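/- arXiv:1909.03371 — 2 statements merged into one kernel-verified Lean document; each statement's English description precedes it below -/
import Mathlib

section
/- Let ρ : [0,1] → dom f be a searching path via regularization with penalty ψ and tuner λ, where in addition the set of minimizers of ψ is nonempty. Then the ultimate region V⁺_f(ρ) = ⋂_{t ∈ [0,1]} U⁺_f(ρ(t)) has nonempty interior. -/
open scoped RealInnerProductSpace

open Set Metric

/-!
At each time the point `x = ρ t` minimizes `f + λ ψ`, so by the sum rule (separating the
epigraph of `f` from the strict hypograph of `f x + λ (ψ x - ψ)` in `E × ℝ`) there is
`v ∈ ∂f(x)` with `-v ∈ λ ∂ψ(x)`. For a minimizer `x̂` of `f` and a minimizer `b` of `ψ`, the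
point `y₀ = 2b - x̂` then satisfies
`⟪v, y₀ - x⟫ ≥ 2 λ (ψ x - ψ b) + (f x - f x̂) ≥ 0`.
If some point of the path minimizes both `f` and `ψ`, every point of the path minimizes `f`
and `v = 0` works. Otherwise, by compactness of the path one of the two gaps is uniformly
bounded below by some `η > 0`, while local boundedness of subgradients near the path gives
`‖v‖ ≤ L` and `‖v‖ ≤ λ L`. Hence `⟪v, y₀ - x⟫ ≥ (η / L) ‖v‖`, and the ball of radius `η / L`
about `y₀` lies in every half-space `H⁺(x, v)`.
-/

section Subgradient

variable {E : Type*} [NormedAddCommGroup E] [InnerProductSpace ℝ E]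

theorem mul_norm_le_of_forall_norm_le_inner_le {v : E} {ε c : ℝ} (hε : 0 ≤ ε)
    (h : ∀ w : E, ‖w‖ ≤ ε → ⟪v, w⟫ ≤ c) : ε * ‖v‖ ≤ c := by
  rcases eq_or_ne v 0 with rfl | hv
  · simpa using h 0 (by simpa using hε)
  have hnv : 0 < ‖v‖ := norm_pos_iff.mpr hv
  have hw : ‖(ε / ‖v‖) • v‖ = ε := by
    rw [norm_smul, Real.norm_of_nonneg (by positivity), div_mul_cancel₀ _ hnv.ne']
  calc ε * ‖v‖ = ⟪v, (ε / ‖v‖) • v⟫ := by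
        rw [real_inner_smul_right, real_inner_self_eq_norm_sq]
        field_simp
    _ ≤ c := h _ hw.le

theorem inner_nonneg_of_mem_ball {v x y₀ y : E} {c : ℝ} (hv : c * ‖v‖ ≤ ⟪v, y₀ - x⟫)
    (hy : y ∈ ball y₀ c) : 0 ≤ ⟪v, y - x⟫ := by
  have hyy₀ : ‖y - y₀‖ < c := by rwa [mem_ball, dist_eq_norm] at hy
  have hcs : -(‖v‖ * ‖y - y₀‖) ≤ ⟪v, y - y₀⟫ := (abs_le.mp (abs_real_inner_le_norm v _)).1
  have hsplit : ⟪v, y - x⟫ = ⟪v, y₀ - x⟫ + ⟪v, y - y₀⟫ := by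
    rw [← inner_add_right, sub_add_sub_cancel']
  nlinarith [norm_nonneg v]

theorem IsCompact.exists_norm_le_of_inner_sub_le [ProperSpace E] {K U : Set E} {F : E → ℝ}
    (hK : IsCompact K) (hU : IsOpen U) (hKU : K ⊆ U) (hF : ContinuousOn F U) :
    ∃ L, ∀ x ∈ K, ∀ v : E, (∀ z ∈ U, ⟪v, z - x⟫ ≤ F z - F x) → ‖v‖ ≤ L := by
  obtain ⟨ε, hε, hεU⟩ := hK.exists_cthickening_subset_open hU hKU
  obtain ⟨C, hC⟩ := hK.cthickening.exists_bound_of_continuousOn (hF.mono hεU)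
  refine ⟨2 * C / ε, fun x hx v hv => (le_div_iff₀' hε).2 ?_⟩
  refine mul_norm_le_of_forall_norm_le_inner_le hε.le fun w hw => ?_
  have hxw : x + w ∈ cthickening ε K :=
    mem_cthickening_of_dist_le _ x ε K hx (by rwa [dist_self_add_left])
  have hxT : x ∈ cthickening ε K := self_subset_cthickening K hx
  calc ⟪v, w⟫ = ⟪v, x + w - x⟫ := by rw [add_sub_cancel_left]
    _ ≤ F (x + w) - F x := hv _ (hεU hxw)
    _ ≤ 2 * C := by linarith [abs_le.mp (hC _ hxw), abs_le.mp (hC _ hxT)]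

theorem exists_subgradient_of_isMinOn_add [CompleteSpace E] {D : Set E} {F g : E → ℝ}
    (hF : ConvexOn ℝ D F) (hg : ConvexOn ℝ univ g) (hgc : Continuous g) {x : E} (hx : x ∈ D)
    (hmin : ∀ z ∈ D, F x + g x ≤ F z + g z) :
    ∃ v : E, (∀ z ∈ D, ⟪v, z - x⟫ ≤ F z - F x) ∧ ∀ z, g x - g z ≤ ⟪v, z - x⟫ := by
  set h : E → ℝ := fun z => F x + g x - g z
  have hO_open : IsOpen {p : E × ℝ | p.1 ∈ univ ∧ p.2 < h p.1} := by
    simpa using isOpen_lt continuous_snd (continuous_const.sub (hgc.comp continuous_fst))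
  have hO_conv : Convex ℝ {p : E × ℝ | p.1 ∈ univ ∧ p.2 < h p.1} :=
    ((concaveOn_const _ convex_univ).sub hg).convex_strict_hypograph
  have hdisj : Disjoint {p : E × ℝ | p.1 ∈ univ ∧ p.2 < h p.1} {p | p.1 ∈ D ∧ F p.1 ≤ p.2} := by
    refine disjoint_left.2 fun p hpO hpC => ?_
    linarith [hpO.2, hpC.2, hmin p.1 hpC.1]
  obtain ⟨φ, u, hφO, hφC⟩ := geometric_hahn_banach_open hO_conv hO_open hF.convex_epigraph hdisj
  -- Write `φ (z, r) = ℓ z + r * β`; the separating hyperplane is non-vertical, i.e. `β > 0`.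
  set ℓ : E →L[ℝ] ℝ := φ.comp (ContinuousLinearMap.inl ℝ E ℝ)
  set β : ℝ := φ (0, 1)
  have hφ : ∀ z r, φ (z, r) = ℓ z + r * β := fun z r => by
    rw [show ((z, r) : E × ℝ) = (z, 0) + r • (0, 1) by ext <;> simp, map_add, map_smul,
      smul_eq_mul]
    rfl
  have hbelow : ∀ z, ∀ r < h z, ℓ z + r * β < u := fun z r hr => by
    simpa [hφ] using hφO (z, r) ⟨mem_univ z, hr⟩
  have habove : ∀ z ∈ D, u ≤ ℓ z + F z * β := fun z hz => by
    simpa [hφ] using hφC (z, F z) ⟨hz, le_rfl⟩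
  have hβ : 0 < β := by
    have := hbelow x (F x - 1) (by linarith)
    linarith [habove x hx]
  have hgraph : ∀ z, ℓ z + h z * β ≤ u := fun z => by
    have : h z ≤ (u - ℓ z) / β := le_of_forall_lt fun r hr => by
      rw [lt_div_iff₀ hβ]; linarith [hbelow z r hr]
    rw [le_div_iff₀ hβ] at this
    linarith
  set w : E := (InnerProductSpace.toDual ℝ E).symm ℓ
  have hinner : ∀ z, ⟪-β⁻¹ • w, z - x⟫ = (ℓ x - ℓ z) / β := fun z => by
    rw [real_inner_smul_left, InnerProductSpace.toDual_symm_apply, map_sub]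
    ring
  refine ⟨-β⁻¹ • w, fun z hz => ?_, fun z => ?_⟩
  · rw [hinner, div_le_iff₀ hβ]
    linarith [hgraph x, habove z hz]
  · rw [hinner, le_div_iff₀ hβ]
    linarith [hgraph z, habove x hx]


theorem mul_norm_le_inner_of_isMinOn_add {D : Set E} {F ψ : E → ℝ} {x v xh b : E}
    {lam η L : ℝ} (hlam : 0 < lam) (hL : 0 < L) (hη : 0 ≤ η)
    (hvF : ∀ z ∈ D, ⟪v, z - x⟫ ≤ F z - F x) (hvψ : ∀ z, lam * ψ x - lam * ψ z ≤ ⟪v, z - x⟫)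
    (hvL : ‖v‖ ≤ L) (hvlamL : ‖v‖ ≤ lam * L) (hxh : xh ∈ D) (hxh_le : F xh ≤ F x)
    (hb_le : ψ b ≤ ψ x) (hmargin : η ≤ ψ x - ψ b ∨ η ≤ F x - F xh) :
    η / L * ‖v‖ ≤ ⟪v, b + (b - xh) - x⟫ := by
  have hb : lam * (ψ x - ψ b) ≤ ⟪v, b - x⟫ := by linarith [hvψ b]
  have hxh : F x - F xh ≤ ⟪v, x - xh⟫ := by
    have := hvF xh hxh
    rw [← neg_sub, inner_neg_right] at this
    linarith
  have hsplit : ⟪v, b + (b - xh) - x⟫ = 2 * ⟪v, b - x⟫ + ⟪v, x - xh⟫ := by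
    rw [show b + (b - xh) - x = (2 : ℝ) • (b - x) + (x - xh) by module, inner_add_right,
      real_inner_smul_right]
  have hψ_gap : 0 ≤ lam * (ψ x - ψ b) := mul_nonneg hlam.le (by linarith)
  rcases hmargin with hη_le | hη_le
  · calc η / L * ‖v‖ ≤ η / L * (lam * L) := by gcongr
      _ = lam * η := by field_simp
      _ ≤ lam * (ψ x - ψ b) := by gcongr
      _ ≤ ⟪v, b + (b - xh) - x⟫ := by linarith
  · calc η / L * ‖v‖ ≤ η / L * L := by gcongr
      _ = η := by field_simp
      _ ≤ ⟪v, b + (b - xh) - x⟫ := by linarith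

theorem IsCompact.exists_subgradient_norm_le_of_isMinOn_add [FiniteDimensional ℝ E]
    {D K : Set E} {F ψ : E → ℝ} (hD : IsOpen D) (hF : ConvexOn ℝ D F)
    (hψ : ConvexOn ℝ univ ψ) (hK : IsCompact K) (hKD : K ⊆ D) :
    ∃ L > 0, ∀ x ∈ K, ∀ lam > 0, (∀ z ∈ D, F x + lam * ψ x ≤ F z + lam * ψ z) →
      ∃ v : E, (∀ z ∈ D, ⟪v, z - x⟫ ≤ F z - F x) ∧
        (∀ z, lam * ψ x - lam * ψ z ≤ ⟪v, z - x⟫) ∧ ‖v‖ ≤ L ∧ ‖v‖ ≤ lam * L := by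
  have hψc : Continuous ψ := continuousOn_univ.1 (hψ.continuousOn isOpen_univ)
  obtain ⟨L₁, hL₁⟩ := hK.exists_norm_le_of_inner_sub_le hD hKD (hF.continuousOn hD)
  obtain ⟨L₂, hL₂⟩ := hK.exists_norm_le_of_inner_sub_le isOpen_univ (subset_univ K)
    hψc.continuousOn
  refine ⟨max (max L₁ L₂) 1, lt_max_of_lt_right one_pos, fun x hx lam hlam hmin => ?_⟩
  obtain ⟨v, hvF, hvψ⟩ := exists_subgradient_of_isMinOn_add hF (hψ.smul hlam.le)
    (continuous_const.mul hψc) (hKD hx) hmin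
  have hvψ' : ∀ z ∈ univ, ⟪-lam⁻¹ • v, z - x⟫ ≤ ψ z - ψ x := fun z _ => by
    calc ⟪-lam⁻¹ • v, z - x⟫ = -lam⁻¹ * ⟪v, z - x⟫ := real_inner_smul_left _ _ _
      _ ≤ -lam⁻¹ * (lam * ψ x - lam * ψ z) :=
        mul_le_mul_of_nonpos_left (hvψ z) (by simp [hlam.le])
      _ = ψ z - ψ x := by field_simp; ring
  have hv₂ : ‖v‖ ≤ lam * L₂ := by
    have := hL₂ x hx _ hvψ'
    rwa [norm_smul, norm_neg, norm_inv, Real.norm_of_nonneg hlam.le, inv_mul_le_iff₀ hlam]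
      at this
  refine ⟨v, hvF, hvψ, (hL₁ x hx v hvF).trans ?_, hv₂.trans ?_⟩
  · exact (le_max_left _ _).trans (le_max_left _ _)
  · gcongr
    exact (le_max_right _ _).trans (le_max_left _ _)

theorem IsCompact.exists_ball_subset_setOf_inner_nonneg [FiniteDimensional ℝ E]
    {D K : Set E} {F ψ : E → ℝ} (hD : IsOpen D) (hF : ConvexOn ℝ D F)
    (hψ : ConvexOn ℝ univ ψ) (hK : IsCompact K) (hKD : K ⊆ D)
    (hreg : ∀ x ∈ K, ∃ lam > 0, ∀ z ∈ D, F x + lam * ψ x ≤ F z + lam * ψ z)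
    {xh b : E} (hxh : xh ∈ D) (hxh_min : ∀ z ∈ D, F xh ≤ F z) (hb : ∀ z, ψ b ≤ ψ z) :
    ∃ y₀, ∃ c > 0, ∀ x ∈ K, ∃ v : E, (∀ z ∈ D, ⟪v, z - x⟫ ≤ F z - F x) ∧
      ball y₀ c ⊆ {y | 0 ≤ ⟪v, y - x⟫} := by
  by_cases hP : ∃ p ∈ D, (∀ z ∈ D, F p ≤ F z) ∧ ∀ z, ψ p ≤ ψ z
  · -- every point of `K` then minimizes `F`, so `v = 0` works
    obtain ⟨p, hpD, hpF, hpψ⟩ := hP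
    refine ⟨0, 1, one_pos, fun x hx => ⟨0, fun z hz => ?_, fun y _ => by simp⟩⟩
    obtain ⟨lam, hlam, hmin⟩ := hreg x hx
    have := mul_le_mul_of_nonneg_left (hpψ x) hlam.le
    simp only [inner_zero_left, sub_nonneg]
    linarith [hmin p hpD, hpF z hz]
  push Not at hP
  have hmargin_pos : ∀ x ∈ K, 0 < max (ψ x - ψ b) (F x - F xh) := fun x hx => by
    by_contra! hle
    have hFx : F x - F xh ≤ 0 := (le_max_right _ _).trans hle
    have hψx : ψ x - ψ b ≤ 0 := (le_max_left _ _).trans hle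
    obtain ⟨z, hz⟩ := hP x (hKD hx) fun z hz => by linarith [hxh_min z hz]
    linarith [hb z]
  have hψc : Continuous ψ := continuousOn_univ.1 (hψ.continuousOn isOpen_univ)
  obtain ⟨η, hη, hη_le⟩ := hK.exists_forall_le'
    ((hψc.continuousOn.sub continuousOn_const).sup
      (((hF.continuousOn hD).mono hKD).sub continuousOn_const)) hmargin_pos
  obtain ⟨L, hL, hbound⟩ := hK.exists_subgradient_norm_le_of_isMinOn_add hD hF hψ hKD
  refine ⟨b + (b - xh), η / L, div_pos hη hL, fun x hx => ?_⟩
  obtain ⟨lam, hlam, hmin⟩ := hreg x hx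
  obtain ⟨v, hvF, hvψ, hvL, hvlamL⟩ := hbound x hx lam hlam hmin
  refine ⟨v, hvF, fun y hy => inner_nonneg_of_mem_ball ?_ hy⟩
  exact mul_norm_le_inner_of_isMinOn_add hlam hL hη.le hvF hvψ hvL hvlamL hxh
    (hxh_min x (hKD hx)) (hb x) (le_max_iff.1 (hη_le x hx))

end Subgradient

theorem convexOn_toReal_of_ereal {E : Type*} [AddCommGroup E] [Module ℝ E] {f : E → EReal}
    (hf_conv : ∀ x y : E, ∀ a b : ℝ, 0 ≤ a → 0 ≤ b → a + b = 1 →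
      f (a • x + b • y) ≤ (a : EReal) * f x + (b : EReal) * f y)
    (hf_nebot : ∀ x, f x ≠ ⊥) :
    ConvexOn ℝ {x | f x ≠ ⊤} fun x => (f x).toReal := by
  have hf : ∀ x, f x ≠ ⊤ → ((f x).toReal : EReal) = f x := fun x hx =>
    EReal.coe_toReal hx (hf_nebot x)
  have hconv : Convex ℝ {x | f x ≠ ⊤} := fun x hx y hy a b ha hb hab => by
    have h := hf_conv x y a b ha hb hab
    rw [← hf x hx, ← hf y hy, ← EReal.coe_mul, ← EReal.coe_mul, ← EReal.coe_add] at h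
    exact ne_top_of_le_ne_top (EReal.coe_ne_top _) h
  refine ⟨hconv, fun x hx y hy a b ha hb hab => ?_⟩
  have h := hf_conv x y a b ha hb hab
  rw [← hf x hx, ← hf y hy, ← hf _ (hconv hx hy ha hb hab), ← EReal.coe_mul, ← EReal.coe_mul,
    ← EReal.coe_add, EReal.coe_le_coe_iff] at h
  exact h

theorem statement_5_general (n : ℕ)
    (f : EuclideanSpace ℝ (Fin n) → EReal)
    -- f is convex
    (hf_conv : ∀ x y : EuclideanSpace ℝ (Fin n), ∀ a b : ℝ, 0 ≤ a → 0 ≤ b → a + b = 1 →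
      f (a • x + b • y) ≤ (a : EReal) * f x + (b : EReal) * f y)
    -- f is proper: never −∞ and finite somewhere
    (hf_nebot : ∀ x, f x ≠ ⊥)
    (hf_proper : ∃ x, f x ≠ ⊤)
    -- the set of minimizers of f is nonempty
    (hf_argmin : ∃ x, ∀ y, f x ≤ f y)
    -- the effective domain of f is open
    (hf_domopen : IsOpen {x : EuclideanSpace ℝ (Fin n) | f x ≠ ⊤})
    -- ψ is a finite-valued convex function
    (ψ : EuclideanSpace ℝ (Fin n) → ℝ) (hψ_conv : ConvexOn ℝ Set.univ ψ)
    -- ρ is a searching path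
    (ρ : ℝ → EuclideanSpace ℝ (Fin n))
    (hρ_cont : ContinuousOn ρ (Set.Icc 0 1))
    (hρ_dom : ∀ t ∈ Set.Icc (0:ℝ) 1, f (ρ t) ≠ ⊤)
    -- λ is positive-valued
    (lam : ℝ → ℝ) (hlam : ∀ t ∈ Set.Icc (0:ℝ) 1, 0 < lam t)
    -- ρ is via regularization: for every t ∈ [0,1], ρ(t) minimizes f + λ(t)·ψ
    (hreg : ∀ t ∈ Set.Icc (0:ℝ) 1, ∀ y,
      f (ρ t) + ((lam t * ψ (ρ t) : ℝ) : EReal) ≤ f y + ((lam t * ψ y : ℝ) : EReal))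
    -- the set of minimizers of ψ is nonempty
    (hψ_argmin : ∃ b, ∀ y, ψ b ≤ ψ y) :
    (interior (⋂ t ∈ Set.Icc (0:ℝ) 1, {y : EuclideanSpace ℝ (Fin n) |
      ∃ xs : EuclideanSpace ℝ (Fin n), (∀ z, f (ρ t) + ((⟪xs, z - ρ t⟫ : ℝ) : EReal) ≤ f z) ∧
        0 ≤ ⟪xs, y - ρ t⟫})).Nonempty := by
  set D := {x : EuclideanSpace ℝ (Fin n) | f x ≠ ⊤}
  set F : EuclideanSpace ℝ (Fin n) → ℝ := fun x => (f x).toReal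
  have hfF : ∀ x ∈ D, ((F x : ℝ) : EReal) = f x := fun x hx => EReal.coe_toReal hx (hf_nebot x)
  obtain ⟨x₀, hx₀⟩ := hf_proper
  obtain ⟨xh, hxh⟩ := hf_argmin
  obtain ⟨b, hb⟩ := hψ_argmin
  have hxhD : xh ∈ D := ne_top_of_le_ne_top hx₀ (hxh x₀)
  have hρ_min : ∀ x ∈ ρ '' Icc 0 1, ∃ lam > 0, ∀ z ∈ D, F x + lam * ψ x ≤ F z + lam * ψ z := by
    rintro _ ⟨t, ht, rfl⟩
    refine ⟨lam t, hlam t ht, fun z hz => ?_⟩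
    have h := hreg t ht z
    rwa [← hfF _ (hρ_dom t ht), ← hfF z hz, ← EReal.coe_add, ← EReal.coe_add,
      EReal.coe_le_coe_iff] at h
  have hxh_min : ∀ z ∈ D, F xh ≤ F z := fun z hz =>
    EReal.coe_le_coe_iff.1 (by rw [hfF xh hxhD, hfF z hz]; exact hxh z)
  obtain ⟨y₀, c, hc, hball⟩ := (isCompact_Icc.image_of_continuousOn hρ_cont)
    |>.exists_ball_subset_setOf_inner_nonneg hf_domopen
      (convexOn_toReal_of_ereal hf_conv hf_nebot) hψ_conv (image_subset_iff.2 hρ_dom) hρ_min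
      hxhD hxh_min hb
  refine ⟨y₀, interior_maximal (fun y hy => mem_iInter₂.2 fun t ht => ?_) isOpen_ball
    (mem_ball_self hc)⟩
  obtain ⟨v, hvF, hv⟩ := hball (ρ t) ⟨t, ht, rfl⟩
  refine ⟨v, fun z => ?_, hv hy⟩
  by_cases hz : z ∈ D
  · rw [← hfF _ (hρ_dom t ht), ← hfF z hz, ← EReal.coe_add, EReal.coe_le_coe_iff]
    linarith [hvF z hz]
  · rw [not_not.1 hz]
    exact le_top

/-- the ultimate region V⁺_f(ρ) of a path via regularization has nonempty interior. -/
theorem statement_5 (n : ℕ) (hn : 1 ≤ n)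
    (f : EuclideanSpace ℝ (Fin n) → EReal)
    -- f is convex
    (hf_conv : ∀ x y : EuclideanSpace ℝ (Fin n), ∀ a b : ℝ, 0 ≤ a → 0 ≤ b → a + b = 1 →
      f (a • x + b • y) ≤ (a : EReal) * f x + (b : EReal) * f y)
    -- f is proper: never −∞ and finite somewhere
    (hf_nebot : ∀ x, f x ≠ ⊥)
    (hf_proper : ∃ x, f x ≠ ⊤)
    -- the set of minimizers of f is nonempty
    (hf_argmin : ∃ x, ∀ y, f x ≤ f y)
    -- the effective domain of f is open
    (hf_domopen : IsOpen {x : EuclideanSpace ℝ (Fin n) | f x ≠ ⊤})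
    -- ψ is a finite-valued convex function
    (ψ : EuclideanSpace ℝ (Fin n) → ℝ) (hψ_conv : ConvexOn ℝ Set.univ ψ)
    -- ρ is a searching path
    (ρ : ℝ → EuclideanSpace ℝ (Fin n))
    (hρ_cont : ContinuousOn ρ (Set.Icc 0 1))
    (hρ_dom : ∀ t ∈ Set.Icc (0:ℝ) 1, f (ρ t) ≠ ⊤)
    -- λ is positive-valued
    (lam : ℝ → ℝ) (hlam : ∀ t ∈ Set.Icc (0:ℝ) 1, 0 < lam t)
    -- ρ is via regularization: for every t ∈ [0,1], ρ(t) minimizes f + λ(t)·ψ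
    (hreg : ∀ t ∈ Set.Icc (0:ℝ) 1, ∀ y,
      f (ρ t) + ((lam t * ψ (ρ t) : ℝ) : EReal) ≤ f y + ((lam t * ψ y : ℝ) : EReal))
    -- the set of minimizers of ψ is nonempty
    (hψ_argmin : ∃ b, ∀ y, ψ b ≤ ψ y) :
    (interior (⋂ t ∈ Set.Icc (0:ℝ) 1, {y : EuclideanSpace ℝ (Fin n) |
      ∃ xs : EuclideanSpace ℝ (Fin n), (∀ z, f (ρ t) + ((⟪xs, z - ρ t⟫ : ℝ) : EReal) ≤ f z) ∧
        0 ≤ ⟪xs, y - ρ t⟫})).Nonempty :=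
  statement_5_general n f hf_conv hf_nebot hf_proper hf_argmin hf_domopen ψ hψ_conv ρ hρ_cont hρ_dom
    lam hlam hreg hψ_argmin
end

section
/- Let D₁, D₂ ⊆ ℝⁿ be nonempty compact convex sets with D₁ ⊆ int D₂, h₁ < h₂ reals, T₁ = {(x, h₁) : x ∈ D₁}, T₂ = {(x, h₂) : x ∈ D₂}, F = conv(T₁ ∪ T₂) the top-heavy frustum with lateral S, and Π₁ = {(x, h₁) : x ∈ ℝⁿ}. Let b̂ = (b, b₀) with b ∈ int D₁ and b₀ < h₁, and let T be a compact convex subset of the hyperplane {(x, h₂) : x ∈ ℝⁿ} such that trunc(b̂, T) is a lower envelope of F, i.e. F ⊆ trunc(b̂, T), T₂ ⊆ T, and trunc(b̂, T) ∩ Π₁ = T₁. Then Stp(S) ≥ Stp(S_b), where S_b is the lateral of trunc(b̂, T). -/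
/-!
Write `T = P × {h₂}`. The lateral of the cone over `T` with apex `b̂` is the graph of
`x ↦ b₀ + (h₂ - b₀) g(x - b)`, where `g` is the gauge of `P` centred at `b`; subadditivity of `g`
bounds the slope between two of its points by `(h₂ - b₀) / ‖w - b‖` for some `w ∈ ∂P`.
The section condition makes `D₁` the image of `P` under the homothety with centre `b` and ratio
`σ = (h₁ - b₀) / (h₂ - b₀)`, so `p = b + σ (w - b)` lies on `∂D₁`. Walking from `p` towards `w` one
leaves `D₂` at some `z` with `‖z - p‖ ≤ ‖w - p‖ = (1 - σ) ‖w - b‖`, and the points `(p, h₁)`,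
`(z, h₂)` of the frustum's lateral have slope at least
`(h₂ - h₁) / ((1 - σ) ‖w - b‖) = (h₂ - b₀) / ‖w - b‖`.
-/

open scoped ENNReal

/-- The steepness of a subset of ℝⁿ × ℝ: the supremum (in `ℝ≥0∞`) of
`|v' − u'| / ‖v − u‖` over pairs `(u, u'), (v, v')` in the set with `v ≠ u`. -/
noncomputable def Stp {n : ℕ} (S : Set (EuclideanSpace ℝ (Fin n) × ℝ)) : ℝ≥0∞ :=
  ⨆ u ∈ S, ⨆ v ∈ S, ⨆ (_ : v.1 ≠ u.1), ENNReal.ofReal (|v.2 - u.2| / ‖v.1 - u.1‖)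

open scoped Topology
open Set AffineMap

theorem eq_prod_singleton_of_forall_snd_eq {α β : Type*} {T : Set (α × β)} {c : β}
    (hT : T ⊆ {z | z.2 = c}) : T = (Prod.fst '' T) ×ˢ {c} := by
  ext z
  refine ⟨fun hz => ⟨mem_image_of_mem _ hz, hT hz⟩, ?_⟩
  rintro ⟨⟨w, hw, hwz⟩, hzc : z.2 = c⟩
  obtain rfl : w = z := Prod.ext hwz ((hT hw).trans hzc.symm)
  exact hw

section Topology
variable {X : Type*} [TopologicalSpace X]

theorem mem_frontier_of_subset_of_mem_frontier {s t : Set X} {x : X} (hst : s ⊆ t) (hx : x ∈ s)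
    (hxt : x ∈ frontier t) : x ∈ frontier s :=
  ⟨subset_closure hx, fun h => hxt.2 (interior_mono hst h)⟩

end Topology

section Translate
variable {G : Type*} [TopologicalSpace G] [AddGroup G] [IsTopologicalAddGroup G] {s : Set G}
  {b x : G}

theorem preimage_add_left_mem_nhds_zero (hb : b ∈ interior s) : (b + ·) ⁻¹' s ∈ 𝓝 0 :=
  (continuous_const_add b).continuousAt.preimage_mem_nhds
    (by simpa using mem_interior_iff_mem_nhds.1 hb)

theorem mem_interior_preimage_add_left : x ∈ interior ((b + ·) ⁻¹' s) ↔ b + x ∈ interior s := by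
  rw [← Homeomorph.coe_addLeft, ← Homeomorph.preimage_interior]; rfl

theorem mem_frontier_preimage_add_left : x ∈ frontier ((b + ·) ⁻¹' s) ↔ b + x ∈ frontier s := by
  rw [← Homeomorph.coe_addLeft, ← Homeomorph.preimage_frontier]; rfl

end Translate

variable {V : Type*} [NormedAddCommGroup V] [NormedSpace ℝ V]

theorem intrinsicInterior_eq_interior {s : Set V} (hs : (interior s).Nonempty) :
    intrinsicInterior ℝ s = interior s := by
  refine Subset.antisymm ?_ interior_subset_intrinsicInterior
  have hspan : affineSpan ℝ s = ⊤ :=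
    affineSpan_eq_top_of_nonempty_interior (hs.mono (interior_mono (subset_convexHull ℝ s)))
  have hopen : IsOpen ((affineSpan ℝ s : AffineSubspace ℝ V) : Set V) := by simp [hspan]
  rintro _ ⟨y, hy, rfl⟩
  exact interior_mono (image_preimage_subset _ _)
    (hopen.isOpenMap_subtype_val.image_interior_subset _ ⟨y, hy, rfl⟩)

theorem interior_image_homothety (b : V) {σ : ℝ} (hσ : σ ≠ 0) (s : Set V) :
    interior (homothety b σ '' s) = homothety b σ '' interior s := by
  let e : V ≃ₜ V :=
    { toEquiv := (AffineEquiv.homothetyUnitsMulHom b (Units.mk0 σ hσ)).toEquiv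
      continuous_toFun := homothety_continuous b σ
      continuous_invFun := homothety_continuous b σ⁻¹ }
  exact (e.image_interior s).symm

section Gauge
variable {s : Set V}

theorem gauge_inv_smul_mem_frontier (hc : Convex ℝ s) (hs₀ : s ∈ 𝓝 0) {x : V}
    (hx : gauge s x ≠ 0) : (gauge s x)⁻¹ • x ∈ frontier s := by
  rw [← gauge_eq_one_iff_mem_frontier hc hs₀, gauge_smul_of_nonneg (inv_nonneg.2 (gauge_nonneg x)),
    smul_eq_mul, inv_mul_cancel₀ hx]

theorem exists_mem_frontier_abs_sub_gauge_div_le (hc : Convex ℝ s) (hs₀ : s ∈ 𝓝 0)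
    (hs : Bornology.IsBounded s) {x y : V} (hxy : x ≠ y) :
    ∃ e ∈ frontier s, |gauge s x - gauge s y| / ‖x - y‖ ≤ ‖e‖⁻¹ := by
  wlog hle : gauge s y ≤ gauge s x generalizing x y
  · obtain ⟨e, he, h⟩ := this hxy.symm (le_of_not_ge hle)
    exact ⟨e, he, by rwa [abs_sub_comm, norm_sub_rev]⟩
  have hpos : 0 < gauge s (x - y) :=
    (gauge_pos (absorbent_nhds_zero hs₀) (NormedSpace.isVonNBounded_iff ℝ |>.2 hs)).2
      (sub_ne_zero.2 hxy)
  refine ⟨_, gauge_inv_smul_mem_frontier hc hs₀ hpos.ne', ?_⟩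
  have hsub : gauge s x ≤ gauge s (x - y) + gauge s y := by
    simpa using gauge_add_le hc (absorbent_nhds_zero hs₀) (x - y) y
  rw [norm_smul, norm_inv, Real.norm_of_nonneg hpos.le, mul_inv, inv_inv, div_eq_mul_inv,
    abs_of_nonneg (sub_nonneg.2 hle)]
  gcongr
  linarith

theorem exists_mem_frontier_dist_le (hc : Convex ℝ s) {p w : V} (hp : p ∈ interior s)
    (hw : w ∉ interior s) : ∃ z ∈ frontier s, dist z p ≤ dist w p := by
  set K := (p + ·) ⁻¹' s
  have hK : K ∈ 𝓝 0 := preimage_add_left_mem_nhds_zero hp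
  have hKc : Convex ℝ K := hc.translate_preimage_right p
  have hge : 1 ≤ gauge K (w - p) := by
    refine not_lt.1 fun h => hw ?_
    simpa using mem_interior_preimage_add_left.1 ((gauge_lt_one_iff_mem_interior hKc hK).1 h)
  refine ⟨p + (gauge K (w - p))⁻¹ • (w - p), ?_, ?_⟩
  · exact mem_frontier_preimage_add_left.1 (gauge_inv_smul_mem_frontier hKc hK (by positivity))
  · rw [dist_eq_norm, dist_eq_norm, add_sub_cancel_left, norm_smul, norm_inv,
      Real.norm_of_nonneg (by positivity)]
    exact mul_le_of_le_one_left (norm_nonneg _) (inv_le_one_of_one_le₀ hge)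

end Gauge

theorem mem_frontier_of_mem_intrinsicFrontier_prod_singleton {P : Set V} {h : ℝ} {w : V × ℝ}
    (hw : w ∈ intrinsicFrontier ℝ (P ×ˢ {h})) : w.1 ∈ frontier P ∧ w.2 = h := by
  have hcl : w ∈ closure P ×ˢ {h} := by
    rw [← closure_singleton, ← closure_prod_eq]
    exact intrinsicClosure_subset_closure (intrinsicFrontier_subset_intrinsicClosure hw)
  rw [← intrinsicClosure_sdiff_intrinsicInterior, intrinsicInterior_prod_eq,
    intrinsicInterior_singleton] at hw
  exact ⟨⟨hcl.1, fun hint => hw.2 ⟨interior_subset_intrinsicInterior hint, hcl.2⟩⟩, hcl.2⟩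

section Cone

def coneLateral (a : V × ℝ) (T : Set (V × ℝ)) : Set (V × ℝ) :=
  {z | ∃ w ∈ intrinsicFrontier ℝ T, ∃ l ∈ Icc (0 : ℝ) 1, z = (1 - l) • a + l • w}

variable {P : Set V} {b : V} {b₀ h : ℝ}

theorem mk_mem_convexHull_cone_iff (hP : Convex ℝ P) (hPne : P.Nonempty) (hb₀ : b₀ ≠ h)
    {l : ℝ} (hl : l ∈ Icc (0 : ℝ) 1) {x : V} :
    (x, b₀ + l * (h - b₀)) ∈ convexHull ℝ ({(b, b₀)} ∪ P ×ˢ {h}) ↔ x ∈ homothety b l '' P := by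
  rw [singleton_union, convexHull_insert (hPne.prod (singleton_nonempty h)),
    (hP.prod (convex_singleton h)).convexHull_eq, mem_convexJoin]
  simp only [segment_eq_image_lineMap]
  constructor
  · rintro ⟨_, rfl, ⟨y, c⟩, ⟨hy, hc : c = h⟩, μ, -, hμ⟩
    have hμl : μ = l := by
      have h2 := congrArg Prod.snd hμ
      rw [snd_lineMap, lineMap_apply_module', hc, smul_eq_mul, add_comm] at h2
      exact mul_right_cancel₀ (sub_ne_zero.2 hb₀.symm) (add_left_cancel h2)
    exact ⟨y, hy, by rw [homothety_eq_lineMap, ← hμl, ← fst_lineMap (k := ℝ) (b, b₀) (y, c), hμ]⟩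
  · rintro ⟨y, hy, rfl⟩
    refine ⟨_, rfl, (y, h), ⟨hy, rfl⟩, l, hl, Prod.ext (fst_lineMap _ _ _) ?_⟩
    rw [snd_lineMap, lineMap_apply_module', smul_eq_mul, add_comm]

theorem snd_eq_of_mem_coneLateral (hP : Convex ℝ P) (hb : b ∈ interior P) {z : V × ℝ}
    (hz : z ∈ coneLateral (b, b₀) (P ×ˢ {h})) :
    z.2 = b₀ + (h - b₀) * gauge ((b + ·) ⁻¹' P) (z.1 - b) := by
  obtain ⟨w, hw, l, hl, rfl⟩ := hz
  obtain ⟨hw₁, hw₂⟩ := mem_frontier_of_mem_intrinsicFrontier_prod_singleton hw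
  have hgauge : gauge ((b + ·) ⁻¹' P) (w.1 - b) = 1 :=
    (gauge_eq_one_iff_mem_frontier (hP.translate_preimage_right b)
      (preimage_add_left_mem_nhds_zero hb)).2
      (mem_frontier_preimage_add_left.2 (by rwa [add_sub_cancel]))
  have hfst : ((1 - l) • (b, b₀) + l • w).1 - b = l • (w.1 - b) := by
    simp only [Prod.fst_add, Prod.smul_fst]
    module
  rw [hfst, gauge_smul_of_nonneg hl.1, hgauge]
  simp only [Prod.snd_add, Prod.smul_snd, smul_eq_mul, hw₂]
  ring

theorem exists_mem_frontier_slope_le_of_mem_coneLateral (hP : Convex ℝ P)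
    (hPb : Bornology.IsBounded P) (hb : b ∈ interior P) (hb₀ : b₀ ≤ h) {u v : V × ℝ}
    (hu : u ∈ coneLateral (b, b₀) (P ×ˢ {h})) (hv : v ∈ coneLateral (b, b₀) (P ×ˢ {h}))
    (huv : v.1 ≠ u.1) : ∃ w ∈ frontier P, |v.2 - u.2| / ‖v.1 - u.1‖ ≤ (h - b₀) / ‖w - b‖ := by
  set K := (b + ·) ⁻¹' P
  have hKb : Bornology.IsBounded K :=
    (IsometryEquiv.constVAdd (X := V) b).isometry.antilipschitz.isBounded_preimage hPb
  obtain ⟨e, he, hle⟩ := exists_mem_frontier_abs_sub_gauge_div_le (hP.translate_preimage_right b)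
    (preimage_add_left_mem_nhds_zero hb) hKb (sub_left_injective.ne huv)
  refine ⟨b + e, mem_frontier_preimage_add_left.1 he, ?_⟩
  rw [sub_sub_sub_cancel_right] at hle
  rw [snd_eq_of_mem_coneLateral hP hb hu, snd_eq_of_mem_coneLateral hP hb hv,
    add_sub_cancel_left, add_sub_add_left_eq_sub, ← mul_sub, abs_mul,
    abs_of_nonneg (sub_nonneg.2 hb₀), mul_div_assoc, div_eq_mul_inv (h - b₀)]
  exact mul_le_mul_of_nonneg_left hle (sub_nonneg.2 hb₀)

end Cone

section Frustum

def frustumLateral (D₁ D₂ : Set V) (h₁ h₂ : ℝ) : Set (V × ℝ) :=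
  frontier (convexHull ℝ (D₁ ×ˢ {h₁} ∪ D₂ ×ˢ {h₂})) \
    (intrinsicInterior ℝ (D₁ ×ˢ {h₁}) ∪ intrinsicInterior ℝ (D₂ ×ˢ {h₂}))

variable {D₁ D₂ : Set V} {h₁ h₂ : ℝ}

theorem frustumLateral_comm : frustumLateral D₁ D₂ h₁ h₂ = frustumLateral D₂ D₁ h₂ h₁ := by
  simp only [frustumLateral, union_comm]

theorem mk_mem_frustumLateral_left (hh : h₁ ≠ h₂) (hD₁ : (interior D₁).Nonempty) {x : V}
    (hx : x ∈ D₁) (hx' : x ∉ interior D₁) : (x, h₁) ∈ frustumLateral D₁ D₂ h₁ h₂ := by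
  have hsub : convexHull ℝ (D₁ ×ˢ {h₁} ∪ D₂ ×ˢ {h₂}) ⊆ Prod.snd ⁻¹' uIcc h₁ h₂ :=
    convexHull_min
      (union_subset (fun z hz => (mem_singleton_iff.1 hz.2) ▸ left_mem_uIcc)
        (fun z hz => (mem_singleton_iff.1 hz.2) ▸ right_mem_uIcc))
      ((convex_uIcc h₁ h₂).linear_preimage (LinearMap.snd ℝ V ℝ))
  have hfr : (x, h₁) ∈ frontier (Prod.snd ⁻¹' uIcc h₁ h₂ : Set (V × ℝ)) := by
    rw [← isOpenMap_snd.preimage_frontier_eq_frontier_preimage continuous_snd, mem_preimage, uIcc,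
      frontier_Icc inf_le_sup]
    rcases le_total h₁ h₂ with h | h <;> simp [h]
  refine ⟨mem_frontier_of_subset_of_mem_frontier hsub
    (subset_convexHull ℝ _ (Or.inl ⟨hx, rfl⟩)) hfr, ?_⟩
  rw [intrinsicInterior_prod_eq, intrinsicInterior_prod_eq, intrinsicInterior_singleton,
    intrinsicInterior_singleton, intrinsicInterior_eq_interior hD₁]
  rintro (⟨hint, -⟩ | ⟨-, hh'⟩)
  exacts [hx' hint, hh hh']

theorem exists_mem_frustumLateral_slope_ge {P : Set V} {b w : V} {b₀ σ : ℝ} (hσ : σ ∈ Ioo (0 : ℝ) 1)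
    (hb₀ : b₀ < h₂) (hh₁ : h₁ = b₀ + σ * (h₂ - b₀)) (hD₁ : D₁ = homothety b σ '' P)
    (hD₁int : (interior D₁).Nonempty) (hD₂ : IsClosed D₂) (hD₂conv : Convex ℝ D₂)
    (htop : D₁ ⊆ interior D₂) (hD₂P : D₂ ⊆ P) (hw : w ∈ P) (hw' : w ∉ interior P) :
    ∃ p ∈ frustumLateral D₁ D₂ h₁ h₂, ∃ q ∈ frustumLateral D₁ D₂ h₁ h₂, q.1 ≠ p.1 ∧
      (h₂ - b₀) / ‖w - b‖ ≤ |q.2 - p.2| / ‖q.1 - p.1‖ := by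
  have hσ₀ : σ ≠ 0 := hσ.1.ne'
  have hh : h₁ < h₂ := by rw [hh₁]; nlinarith [hσ.2]
  set p := homothety b σ w
  have hp : p ∈ D₁ := hD₁ ▸ mem_image_of_mem _ hw
  have hp' : p ∉ interior D₁ := by
    rwa [hD₁, interior_image_homothety b hσ₀, (homothety_injective b hσ₀).mem_set_image]
  obtain ⟨z, hz, hzp⟩ :=
    exists_mem_frontier_dist_le hD₂conv (htop hp) fun h => hw' (interior_mono hD₂P h)
  have hzp₀ : 0 < dist z p := dist_pos.2 fun h => hz.2 (h ▸ htop hp)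
  refine ⟨(p, h₁), mk_mem_frustumLateral_left hh.ne hD₁int hp hp', (z, h₂), ?_,
    dist_pos.1 hzp₀, ?_⟩
  · rw [frustumLateral_comm]
    exact mk_mem_frustumLateral_left hh.ne' ⟨p, htop hp⟩ (hD₂.frontier_subset hz) hz.2
  have hwp : dist w p = (1 - σ) * dist w b := by
    rw [dist_comm, dist_homothety_self, Real.norm_of_nonneg (sub_nonneg.2 hσ.2.le), dist_comm]
  change (h₂ - b₀) / ‖w - b‖ ≤ |h₂ - h₁| / ‖z - p‖
  rw [← dist_eq_norm, ← dist_eq_norm, abs_of_pos (sub_pos.2 hh)]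
  calc (h₂ - b₀) / dist w b = (h₂ - h₁) / dist w p := by
        rw [hwp, hh₁, show h₂ - (b₀ + σ * (h₂ - b₀)) = (1 - σ) * (h₂ - b₀) by ring,
          mul_div_mul_left _ _ (sub_pos.2 hσ.2).ne']
    _ ≤ (h₂ - h₁) / dist z p := div_le_div_of_nonneg_left (sub_pos.2 hh).le hzp₀ hzp

end Frustum

section Steepness
variable {n : ℕ} {S : Set (EuclideanSpace ℝ (Fin n) × ℝ)}

theorem Stp_le_iff {c : ℝ≥0∞} : Stp S ≤ c ↔ ∀ u ∈ S, ∀ v ∈ S, v.1 ≠ u.1 →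
    ENNReal.ofReal (|v.2 - u.2| / ‖v.1 - u.1‖) ≤ c := by
  simp only [Stp, iSup_le_iff]

theorem ofReal_le_Stp {u v : EuclideanSpace ℝ (Fin n) × ℝ} (hu : u ∈ S) (hv : v ∈ S)
    (huv : v.1 ≠ u.1) : ENNReal.ofReal (|v.2 - u.2| / ‖v.1 - u.1‖) ≤ Stp S :=
  Stp_le_iff.1 le_rfl u hu v hv huv

end Steepness

theorem statement_13_general (n : ℕ)
    (D₁ D₂ : Set (EuclideanSpace ℝ (Fin n)))
    (hD₂cpt : IsCompact D₂) (hD₂conv : Convex ℝ D₂)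
    (htop : D₁ ⊆ interior D₂)
    (h₁ h₂ : ℝ) (hh : h₁ < h₂)
    (T₁ T₂ F : Set (EuclideanSpace ℝ (Fin n) × ℝ))
    (hT₁ : T₁ = (fun x => (x, h₁)) '' D₁)
    (hT₂ : T₂ = (fun x => (x, h₂)) '' D₂)
    (hF : F = convexHull ℝ (T₁ ∪ T₂))
    (S : Set (EuclideanSpace ℝ (Fin n) × ℝ))
    (hS : S = frontier F \ (intrinsicInterior ℝ T₁ ∪ intrinsicInterior ℝ T₂))
    (b : EuclideanSpace ℝ (Fin n)) (b₀ : ℝ) (hb : b ∈ interior D₁) (hb₀ : b₀ < h₁)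
    (T : Set (EuclideanSpace ℝ (Fin n) × ℝ)) (hTcpt : IsCompact T) (hTconv : Convex ℝ T)
    (hThyp : T ⊆ {z : EuclideanSpace ℝ (Fin n) × ℝ | z.2 = h₂})
    (hT₂T : T₂ ⊆ T)
    (hsect : convexHull ℝ ({((b, b₀) : EuclideanSpace ℝ (Fin n) × ℝ)} ∪ T) ∩ {z : EuclideanSpace ℝ (Fin n) × ℝ | z.2 = h₁} = T₁)
    (Sb : Set (EuclideanSpace ℝ (Fin n) × ℝ))
    (hSb : Sb = {z | ∃ w ∈ intrinsicFrontier ℝ T, ∃ l ∈ Set.Icc (0:ℝ) 1,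
      z = (1 - l) • ((b, b₀) : EuclideanSpace ℝ (Fin n) × ℝ) + l • w}) :
    Stp Sb ≤ Stp S := by
  obtain ⟨P, rfl⟩ : ∃ P, T = P ×ˢ {h₂} := ⟨_, eq_prod_singleton_of_forall_snd_eq hThyp⟩
  rw [← prod_singleton] at hT₁ hT₂
  subst hT₁ hT₂ hF hS hSb
  have hfst : Prod.fst '' P ×ˢ {h₂} = P := fst_image_prod P (singleton_nonempty h₂)
  have hPcpt : IsCompact P := hfst ▸ hTcpt.image continuous_fst
  have hPconv : Convex ℝ P := hfst ▸ hTconv.linear_image (LinearMap.fst ℝ _ ℝ)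
  have hD₂P : D₂ ⊆ P := fun x hx => (hT₂T (mk_mem_prod hx (mem_singleton h₂))).1
  have hbP : b ∈ interior P := interior_mono hD₂P (htop (interior_subset hb))
  have hb₀h₂ : b₀ < h₂ := hb₀.trans hh
  set σ := (h₁ - b₀) / (h₂ - b₀)
  have hσ : σ ∈ Ioo (0 : ℝ) 1 :=
    ⟨div_pos (sub_pos.2 hb₀) (sub_pos.2 hb₀h₂), (div_lt_one (sub_pos.2 hb₀h₂)).2 (by linarith)⟩
  have hh₁ : h₁ = b₀ + σ * (h₂ - b₀) := by
    rw [div_mul_cancel₀ _ (sub_pos.2 hb₀h₂).ne']; ring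
  have hD₁ : D₁ = homothety b σ '' P := by
    ext x
    rw [← mk_mem_convexHull_cone_iff hPconv ⟨b, interior_subset hbP⟩ hb₀h₂.ne
      (Ioo_subset_Icc_self hσ), ← hh₁]
    simpa using (congrArg ((x, h₁) ∈ ·) hsect).symm
  rw [Stp_le_iff]
  intro u hu v hv huv
  obtain ⟨w, hw, hle⟩ := exists_mem_frontier_slope_le_of_mem_coneLateral hPconv hPcpt.isBounded
    hbP hb₀h₂.le hu hv huv
  obtain ⟨p, hp, q, hq, hpq, hge⟩ := exists_mem_frustumLateral_slope_ge hσ hb₀h₂ hh₁ hD₁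
    ⟨b, hb⟩ hD₂cpt.isClosed hD₂conv htop hD₂P (hPcpt.isClosed.frontier_subset hw) hw.2
  exact (ENNReal.ofReal_le_ofReal (hle.trans hge)).trans (ofReal_le_Stp hp hq hpq)

/-- the lateral of a top-heavy frustum is at least as steep as the lateral of a lower envelope. -/
theorem statement_13 (n : ℕ) (hn : 1 ≤ n)
    (D₁ D₂ : Set (EuclideanSpace ℝ (Fin n)))
    (hD₁ne : D₁.Nonempty) (hD₂ne : D₂.Nonempty)
    (hD₁cpt : IsCompact D₁) (hD₁conv : Convex ℝ D₁)
    (hD₂cpt : IsCompact D₂) (hD₂conv : Convex ℝ D₂)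
    (htop : D₁ ⊆ interior D₂)
    (h₁ h₂ : ℝ) (hh : h₁ < h₂)
    (T₁ T₂ F : Set (EuclideanSpace ℝ (Fin n) × ℝ))
    (hT₁ : T₁ = (fun x => (x, h₁)) '' D₁)
    (hT₂ : T₂ = (fun x => (x, h₂)) '' D₂)
    (hF : F = convexHull ℝ (T₁ ∪ T₂))
    (S : Set (EuclideanSpace ℝ (Fin n) × ℝ))
    (hS : S = frontier F \ (intrinsicInterior ℝ T₁ ∪ intrinsicInterior ℝ T₂))
    (b : EuclideanSpace ℝ (Fin n)) (b₀ : ℝ) (hb : b ∈ interior D₁) (hb₀ : b₀ < h₁)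
    (T : Set (EuclideanSpace ℝ (Fin n) × ℝ)) (hTcpt : IsCompact T) (hTconv : Convex ℝ T)
    (hThyp : T ⊆ {z : EuclideanSpace ℝ (Fin n) × ℝ | z.2 = h₂})
    -- trunc(b̂, T) is a lower envelope of F
    (henv : F ⊆ convexHull ℝ ({((b, b₀) : EuclideanSpace ℝ (Fin n) × ℝ)} ∪ T))
    (hT₂T : T₂ ⊆ T)
    (hsect : convexHull ℝ ({((b, b₀) : EuclideanSpace ℝ (Fin n) × ℝ)} ∪ T) ∩ {z : EuclideanSpace ℝ (Fin n) × ℝ | z.2 = h₁} = T₁)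
    (Sb : Set (EuclideanSpace ℝ (Fin n) × ℝ))
    (hSb : Sb = {z | ∃ w ∈ intrinsicFrontier ℝ T, ∃ l ∈ Set.Icc (0:ℝ) 1,
      z = (1 - l) • ((b, b₀) : EuclideanSpace ℝ (Fin n) × ℝ) + l • w}) :
    Stp Sb ≤ Stp S :=
  statement_13_general n D₁ D₂ hD₂cpt hD₂conv htop h₁ h₂ hh T₁ T₂ F hT₁ hT₂ hF S hS b b₀ hb hb₀ T
    hTcpt hTconv hThyp hT₂T hsect Sb hSb
end
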